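/- arXiv:2305.10048 — 2 statements merged into one kernel-verified Lean document; each statement's English description precedes it below -/
import Mathlib

section
/- Let a < b be real numbers and let μ be a Borel probability measure on ℝ whose support is an infinite set contained in the interval [a, b], and assume that μ([b − ε, b]) > 0 for every ε > 0. Let (P_n)_{n ≥ 0} be a sequence of real polynomials such that deg P_n = n for every n, such that ∫ P_n · P_m dμ = 0 whenever n ≠ m, and normalized so that P_n(b) = 1 for every n. Then P_n'(b) → +∞ as n → ∞. -/
/-!
A polynomial `p` of degree `n` orthogonal to all polynomials of lower degree has `n` real zeros in
`[a, b]`: otherwise, multiplying `p` by the product `q` of `X - r` over its zeros of odd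
multiplicity in `[a, b]` gives a polynomial `p q` of constant sign on `[a, b]` with `∫ p q dμ = 0`,
so `p q` vanishes on the infinite support of `μ`. Since `P_n(b) = 1`, all zeros `r` of `P_n` lie
in `[a, b)`, and `P_n'(b) = P_n'(b) / P_n(b) = ∑ 1 / (b - r) ≥ n / (b - a)`.
-/

open MeasureTheory Filter Polynomial

/-- The (topological) support of a Borel measure on `ℝ`: the set of points every
neighbourhood of which has positive measure. -/
def measureSupport (μ : Measure ℝ) : Set ℝ :=
  {x : ℝ | ∀ U ∈ nhds x, 0 < μ U}

lemma measureSupport_eq_support (μ : Measure ℝ) : measureSupport μ = μ.support :=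
  Set.ext fun x => (Measure.mem_support_iff_forall x).symm

section Support

variable {X : Type*} [TopologicalSpace X] [MeasurableSpace X] [HereditarilyLindelofSpace X]
  {μ : Measure X}

lemma Continuous.integrable_of_measure_support_subset_isCompact [OpensMeasurableSpace X] [T2Space X]
    [IsFiniteMeasure μ] {f : X → ℝ} (hf : Continuous f) {K : Set X} (hK : IsCompact K)
    (hsupp : μ.support ⊆ K) : Integrable f μ := by
  have hae : ∀ᵐ x ∂μ, x ∈ K := mem_of_superset Measure.support_mem_ae hsupp
  rw [← Measure.restrict_eq_self_of_ae_mem hae]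
  exact hf.continuousOn.integrableOn_compact hK

lemma Continuous.measure_support_subset_setOf_eq_zero_of_integral_eq_zero {f : X → ℝ}
    (hf : Continuous f) (hf_nonneg : ∀ x ∈ μ.support, 0 ≤ f x) (hf_int : Integrable f μ)
    (h : ∫ x, f x ∂μ = 0) : μ.support ⊆ {x | f x = 0} := by
  have hnonneg : 0 ≤ᵐ[μ] f := mem_of_superset Measure.support_mem_ae hf_nonneg
  refine Measure.support_subset_of_isClosed (isClosed_eq hf continuous_const) ?_
  exact (integral_eq_zero_iff_of_nonneg_ae hnonneg hf_int).mp h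

end Support

lemma Set.OrdConnected.mul_sub_nonneg_of_notMem {s : Set ℝ} (hs : s.OrdConnected) {x y r : ℝ}
    (hx : x ∈ s) (hy : y ∈ s) (hr : r ∉ s) : 0 ≤ (x - r) * (y - r) := by
  by_contra! hneg
  refine hr (hs.uIcc_subset hx hy ?_)
  rcases mul_neg_iff.mp hneg with ⟨h₁, h₂⟩ | ⟨h₁, h₂⟩
  · exact Set.mem_uIcc.mpr (Or.inr ⟨by linarith, by linarith⟩)
  · exact Set.mem_uIcc.mpr (Or.inl ⟨by linarith, by linarith⟩)

namespace Polynomial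

lemma mem_span_image_Iio_of_degree_lt {K : Type*} [Field K] {P : ℕ → K[X]}
    (hdeg : ∀ k, (P k).degree = k) {n : ℕ} {Q : K[X]} (hQ : Q.degree < n) :
    Q ∈ Submodule.span K (P '' Set.Iio n) := by
  induction n generalizing Q with
  | zero => simp [degree_eq_bot.mp (Nat.WithBot.lt_zero_iff.mp hQ)]
  | succ n ih =>
    have hPn : (P n).leadingCoeff ≠ 0 :=
      leadingCoeff_ne_zero.mpr (ne_zero_of_coe_le_degree (hdeg n).ge)
    set c := Q.coeff n / (P n).leadingCoeff with hc
    have hlow : (Q - C c * P n).degree < n := by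
      rw [degree_lt_iff_coeff_zero] at hQ ⊢
      intro m hm
      rcases hm.eq_or_lt with rfl | hm
      · rw [coeff_sub, coeff_C_mul, show (P n).coeff n = (P n).leadingCoeff by
          rw [leadingCoeff, natDegree_eq_of_degree_eq_some (hdeg n)], hc, div_mul_cancel₀ _ hPn,
          sub_self]
      · rw [coeff_sub, coeff_C_mul, hQ m hm,
          coeff_eq_zero_of_degree_lt ((hdeg n).trans_lt (WithBot.coe_lt_coe.mpr hm)), mul_zero,
          sub_zero]
    have hmono : Submodule.span K (P '' Set.Iio n) ≤ Submodule.span K (P '' Set.Iio (n + 1)) :=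
      Submodule.span_mono (Set.image_mono (Set.Iio_subset_Iio n.le_succ))
    have hPn_mem : P n ∈ Submodule.span K (P '' Set.Iio (n + 1)) :=
      Submodule.subset_span ⟨n, n.lt_succ_self, rfl⟩
    have := Submodule.add_mem _ (hmono (ih hlow)) (Submodule.smul_mem _ c hPn_mem)
    rwa [smul_eq_C_mul, sub_add_cancel] at this

lemma integral_eval_mul_eq_zero_of_degree_lt {μ : Measure ℝ}
    (hint : ∀ q : ℝ[X], Integrable (fun x => q.eval x) μ) {P : ℕ → ℝ[X]}
    (hdeg : ∀ k, (P k).degree = k)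
    (horth : ∀ n m : ℕ, n ≠ m → ∫ x, (P n).eval x * (P m).eval x ∂μ = 0)
    {n : ℕ} {Q : ℝ[X]} (hQ : Q.degree < n) : ∫ x, (P n).eval x * Q.eval x ∂μ = 0 := by
  have hint' : ∀ q : ℝ[X], Integrable (fun x => (P n).eval x * q.eval x) μ := fun q => by
    simpa only [eval_mul] using hint (P n * q)
  have hspan := mem_span_image_Iio_of_degree_lt hdeg hQ
  clear hQ
  induction hspan using Submodule.span_induction with
  | mem q hq =>
    obtain ⟨k, hk, rfl⟩ := hq
    exact horth n k (Nat.ne_of_gt hk)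
  | zero => simp
  | add p q _ _ hp hq =>
    simp only [eval_add, mul_add, integral_add (hint' p) (hint' q), hp, hq, add_zero]
  | smul c q _ hq =>
    simp only [eval_smul, smul_eq_mul, mul_left_comm _ c, integral_const_mul, hq, mul_zero]

lemma eval_mul_eval_pos_of_forall_ne_zero {g : ℝ[X]} (hg : ∀ z, g.eval z ≠ 0) (x y : ℝ) :
    0 < g.eval x * g.eval y := by
  by_contra! hle
  have hzero : (0 : ℝ) ∈ Set.uIcc (g.eval x) (g.eval y) := by
    rcases hle.lt_or_eq with hneg | hzero
    · rcases mul_neg_iff.mp hneg with ⟨h₁, h₂⟩ | ⟨h₁, h₂⟩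
      · exact Set.mem_uIcc.mpr (Or.inr ⟨h₂.le, h₁.le⟩)
      · exact Set.mem_uIcc.mpr (Or.inl ⟨h₁.le, h₂.le⟩)
    · exact absurd hzero (mul_ne_zero (hg x) (hg y))
  obtain ⟨z, -, hz⟩ := intermediate_value_uIcc g.continuous.continuousOn hzero
  exact hg z hz

/-- Writing `R = ∏ (X - r) * g` over the real roots `r`, with `g` free of real roots, the roots
outside `s` contribute factors `(x - r) (y - r) ≥ 0` and those inside `s` appear to even powers. -/
lemma eval_mul_eval_nonneg_of_even_rootMultiplicity {s : Set ℝ} (hs : s.OrdConnected) {R : ℝ[X]}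
    (hR : R ≠ 0) (heven : ∀ r ∈ s, Even (R.rootMultiplicity r)) {x y : ℝ} (hx : x ∈ s)
    (hy : y ∈ s) : 0 ≤ R.eval x * R.eval y := by
  classical
  obtain ⟨g, hfac, -, hg⟩ := R.exists_prod_multiset_X_sub_C_mul
  have hg0 : g ≠ 0 := by rintro rfl; exact hR (by rw [← hfac, mul_zero])
  have hg_ne : ∀ z, g.eval z ≠ 0 := fun z hz => by
    simpa [hg] using (mem_roots hg0).mpr hz
  have heval : ∀ t, R.eval t = (R.roots.map fun r => t - r).prod * g.eval t := fun t => by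
    conv_lhs => rw [← hfac]
    simp [eval_multiset_prod, Multiset.map_map]
  have hprod : R.eval x * R.eval y =
      (∏ r ∈ R.roots.toFinset, ((x - r) * (y - r)) ^ R.rootMultiplicity r) *
        (g.eval x * g.eval y) := by
    rw [heval x, heval y, mul_mul_mul_comm, ← Multiset.prod_map_mul, Finset.prod_multiset_map_count]
    simp only [count_roots]
  rw [hprod]
  refine mul_nonneg (Finset.prod_nonneg fun r _ => ?_)
    (eval_mul_eval_pos_of_forall_ne_zero hg_ne x y).le
  by_cases hr : r ∈ s
  · exact (heven r hr).pow_nonneg _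
  · exact pow_nonneg (hs.mul_sub_nonneg_of_notMem hx hy hr) _

lemma integral_eval_ne_zero_of_even_rootMultiplicity {μ : Measure ℝ} [IsFiniteMeasure μ] {a b : ℝ}
    (hsupp : μ.support ⊆ Set.Icc a b) (hinf : μ.support.Infinite) {R : ℝ[X]} (hR : R ≠ 0)
    (heven : ∀ r ∈ Set.Icc a b, Even (R.rootMultiplicity r)) : ∫ x, R.eval x ∂μ ≠ 0 := by
  intro hzero
  obtain ⟨x₀, hx₀, hRx₀⟩ := (hinf.sdiff (finite_setOfPred_isRoot hR)).nonempty
  have hcont : Continuous fun x => R.eval x₀ * R.eval x := R.continuous.const_mul _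
  have hvanish := hcont.measure_support_subset_setOf_eq_zero_of_integral_eq_zero
    (fun x hx => eval_mul_eval_nonneg_of_even_rootMultiplicity Set.ordConnected_Icc hR heven
      (hsupp hx₀) (hsupp hx))
    (hcont.integrable_of_measure_support_subset_isCompact isCompact_Icc hsupp)
    (by rw [integral_const_mul, hzero, mul_zero]) hx₀
  exact hRx₀ (mul_self_eq_zero.mp hvanish)

lemma natDegree_le_card_filter_odd_rootMultiplicity {μ : Measure ℝ} [IsFiniteMeasure μ]
    {a b : ℝ} (hsupp : μ.support ⊆ Set.Icc a b) (hinf : μ.support.Infinite) {p : ℝ[X]}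
    (horth : ∀ q : ℝ[X], q.degree < p.natDegree → ∫ x, p.eval x * q.eval x ∂μ = 0) :
    p.natDegree ≤
      (p.roots.toFinset.filter fun r => r ∈ Set.Icc a b ∧ Odd (p.rootMultiplicity r)).card := by
  classical
  set T := p.roots.toFinset.filter fun r => r ∈ Set.Icc a b ∧ Odd (p.rootMultiplicity r)
  by_contra! hlt
  have hp : p ≠ 0 := by rintro rfl; simp at hlt
  set Q := ∏ r ∈ T, (X - C r)
  have hQ : Q ≠ 0 := (monic_prod_X_sub_C id T).ne_zero
  have hQdeg : Q.degree < p.natDegree := by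
    rwa [degree_eq_natDegree hQ, natDegree_finsetProd_X_sub_C_eq_card, Nat.cast_lt]
  refine integral_eval_ne_zero_of_even_rootMultiplicity hsupp hinf (mul_ne_zero hp hQ)
    (fun r hr => ?_) (by simpa only [eval_mul] using horth Q hQdeg)
  rw [rootMultiplicity_mul (mul_ne_zero hp hQ), ← count_roots Q, roots_prod_X_sub_C,
    Multiset.count_eq_of_nodup T.nodup]
  simp only [Finset.mem_val]
  by_cases hodd : Odd (p.rootMultiplicity r)
  · have hroot : r ∈ p.roots := (mem_roots hp).mpr ((rootMultiplicity_pos hp).mp hodd.pos)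
    have hrT : r ∈ T := Finset.mem_filter.mpr ⟨Multiset.mem_toFinset.mpr hroot, hr, hodd⟩
    rw [if_pos hrT]
    exact hodd.add_one
  · have hrT : r ∉ T := fun h => hodd (Finset.mem_filter.mp h).2.2
    rw [if_neg hrT, add_zero]
    exact Nat.not_odd_iff_even.mp hodd

lemma splits_and_roots_mem_Icc_of_orthogonal {μ : Measure ℝ} [IsFiniteMeasure μ]
    {a b : ℝ} (hsupp : μ.support ⊆ Set.Icc a b) (hinf : μ.support.Infinite) {p : ℝ[X]}
    (horth : ∀ q : ℝ[X], q.degree < p.natDegree → ∫ x, p.eval x * q.eval x ∂μ = 0) :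
    p.Splits ∧ ∀ r ∈ p.roots, r ∈ Set.Icc a b := by
  classical
  have hT := natDegree_le_card_filter_odd_rootMultiplicity hsupp hinf horth
  set T := p.roots.toFinset.filter fun r => r ∈ Set.Icc a b ∧ Odd (p.rootMultiplicity r)
  have hTsub : T ⊆ p.roots.toFinset := Finset.filter_subset _ _
  have hcard : p.roots.card = p.natDegree := le_antisymm (card_roots' p)
    (hT.trans ((Finset.card_le_card hTsub).trans (Multiset.toFinset_card_le _)))
  have hTeq : T = p.roots.toFinset :=
    Finset.eq_of_subset_of_card_le hTsub ((Multiset.toFinset_card_le _).trans (hcard ▸ hT))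
  refine ⟨splits_iff_card_roots.mpr hcard, fun r hr => ?_⟩
  have hrT : r ∈ T := hTeq ▸ Multiset.mem_toFinset.mpr hr
  exact (Finset.mem_filter.mp hrT).2.1

lemma natDegree_div_le_eval_derivative_div_eval {p : ℝ[X]} (hp : p.Splits) {a b : ℝ}
    (hb : p.eval b ≠ 0) (hroots : ∀ r ∈ p.roots, r ∈ Set.Icc a b) :
    p.natDegree / (b - a) ≤ p.derivative.eval b / p.eval b := by
  have hp0 : p ≠ 0 := by rintro rfl; exact hb eval_zero
  have hterm : ∀ r ∈ p.roots, 1 / (b - a) ≤ 1 / (b - r) := fun r hr => by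
    have hrb : r ≠ b := by rintro rfl; exact hb ((mem_roots hp0).mp hr)
    obtain ⟨har, hrb'⟩ := hroots r hr
    exact one_div_le_one_div_of_le (sub_pos.mpr (lt_of_le_of_ne hrb' hrb)) (by linarith)
  rw [hp.eval_derivative_div_eval_of_ne_zero hb, hp.natDegree_eq_card_roots]
  calc (p.roots.card : ℝ) / (b - a)
        = (p.roots.map fun r => 1 / (b - r)).card • (1 / (b - a)) := by
        rw [Multiset.card_map, nsmul_eq_mul, mul_one_div]
    _ ≤ (p.roots.map fun r => 1 / (b - r)).sum :=
        Multiset.card_nsmul_le_sum fun x hx => by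
          obtain ⟨r, hr, rfl⟩ := Multiset.mem_map.mp hx
          exact hterm r hr

end Polynomial

theorem deriv_orthogonal_polynomials_tendsto_atTop_general
    (a b : ℝ) (hab : a < b) (μ : Measure ℝ) [IsProbabilityMeasure μ]
    (hsupp_sub : measureSupport μ ⊆ Set.Icc a b)
    (hsupp_inf : (measureSupport μ).Infinite)
    (P : ℕ → Polynomial ℝ)
    (hdeg : ∀ n : ℕ, (P n).degree = n)
    (horth : ∀ n m : ℕ, n ≠ m → ∫ x, (P n).eval x * (P m).eval x ∂μ = 0)
    (hnorm : ∀ n : ℕ, (P n).eval b = 1) :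
    Tendsto (fun n : ℕ => ((P n).derivative).eval b) atTop atTop := by
  rw [measureSupport_eq_support] at hsupp_sub hsupp_inf
  have hint (q : ℝ[X]) : Integrable (fun x => q.eval x) μ :=
    q.continuous.integrable_of_measure_support_subset_isCompact isCompact_Icc hsupp_sub
  have hbound (n : ℕ) : (n : ℝ) / (b - a) ≤ ((P n).derivative).eval b := by
    have hnat : (P n).natDegree = n := natDegree_eq_of_degree_eq_some (hdeg n)
    obtain ⟨hsplit, hroots⟩ := splits_and_roots_mem_Icc_of_orthogonal hsupp_sub hsupp_inf
      fun q hq => integral_eval_mul_eq_zero_of_degree_lt hint hdeg horth (hnat ▸ hq)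
    have := natDegree_div_le_eval_derivative_div_eval hsplit (by simp [hnorm n]) hroots
    rwa [hnat, hnorm n, div_one] at this
  exact tendsto_atTop_mono hbound
    (tendsto_natCast_atTop_atTop.atTop_div_const (sub_pos.mpr hab))

/-- Let `a < b` and let `μ` be a Borel probability measure on `ℝ`
whose support is infinite and contained in `[a, b]`, with `μ([b - ε, b]) > 0`
for every `ε > 0`. If `(P n)` is a sequence of real polynomials with
`deg (P n) = n`, orthogonal with respect to `μ`, and normalized by
`P n (b) = 1`, then `(P n)' (b) → ∞`. -/
theorem deriv_orthogonal_polynomials_tendsto_atTop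
    (a b : ℝ) (hab : a < b) (μ : Measure ℝ) [IsProbabilityMeasure μ]
    (hsupp_sub : measureSupport μ ⊆ Set.Icc a b)
    (hsupp_inf : (measureSupport μ).Infinite)
    (hb : ∀ ε : ℝ, 0 < ε → 0 < μ (Set.Icc (b - ε) b))
    (P : ℕ → Polynomial ℝ)
    (hdeg : ∀ n : ℕ, (P n).degree = n)
    (horth : ∀ n m : ℕ, n ≠ m → ∫ x, (P n).eval x * (P m).eval x ∂μ = 0)
    (hnorm : ∀ n : ℕ, (P n).eval b = 1) :
    Tendsto (fun n : ℕ => ((P n).derivative).eval b) atTop atTop :=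
  deriv_orthogonal_polynomials_tendsto_atTop_general a b hab μ hsupp_sub hsupp_inf P hdeg horth
    hnorm
end

section
/- Let P be a real polynomial of degree n ≥ 1 having n distinct real roots x₁ < x₂ < ⋯ < x_n, and let b be a real number with b > x_n and P(b) = 1. Then P'(b) ≥ 1/(b − x_n), and the inequality is strict if n ≥ 2. -/
open Polynomial

/-- Let `P` be a real polynomial of degree `n ≥ 1` with `n`
distinct real roots `x 0 < x 1 < ⋯ < x (n-1)`, and let `b` be a real number
larger than the largest root with `P b = 1`. Then `P' b ≥ 1 / (b - x (n-1))`,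
with strict inequality if `n ≥ 2`. -/
theorem deriv_ge_inv_dist_largest_root
    (n : ℕ) (hn : 1 ≤ n) (P : Polynomial ℝ) (hdeg : P.natDegree = n)
    (x : Fin n → ℝ) (hmono : StrictMono x) (hroot : ∀ i, P.IsRoot (x i))
    (b : ℝ) (hb : x ⟨n - 1, by omega⟩ < b) (hPb : P.eval b = 1) :
    1 / (b - x ⟨n - 1, by omega⟩) ≤ (Polynomial.derivative P).eval b ∧
      (2 ≤ n → 1 / (b - x ⟨n - 1, by omega⟩) < (Polynomial.derivative P).eval b) := by
  set l : Fin n := ⟨n - 1, by omega⟩ with hl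
  have hle : ∀ i : Fin n, x i ≤ x l := by
    intro i
    exact hmono.monotone (by simp [hl, Fin.le_def]; omega)
  have hpos : ∀ i : Fin n, 0 < b - x i := fun i => by
    have := hle i; linarith
  have hP0 : P ≠ 0 := by
    intro h
    rw [h, Polynomial.natDegree_zero] at hdeg
    omega
  set s : Finset ℝ := Finset.image x Finset.univ with hs
  have hcard_s : s.card = n := by
    rw [hs, Finset.card_image_of_injective _ hmono.injective, Finset.card_univ,
      Fintype.card_fin]
  have hsub : s.val ≤ P.roots := by
    rw [Finset.val_le_iff_val_subset]
    intro a ha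
    rw [Finset.mem_val, hs, Finset.mem_image] at ha
    obtain ⟨i, _, rfl⟩ := ha
    exact Polynomial.mem_roots'.mpr ⟨hP0, hroot i⟩
  have hcardv : Multiset.card s.val = n := by rw [← hcard_s]; rfl
  have hroots : P.roots = s.val := by
    refine (Multiset.eq_of_le_of_card_le hsub ?_).symm
    calc Multiset.card P.roots ≤ P.natDegree := Polynomial.card_roots' P
      _ = Multiset.card s.val := by rw [hdeg, hcardv]
  have hsval : s.val = Multiset.map x Finset.univ.val := by
    rw [hs, Finset.image_val, Multiset.dedup_eq_self.mpr]
    exact Multiset.Nodup.map hmono.injective Finset.univ.nodup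
  set c : ℝ := P.leadingCoeff with hc
  have hfac : P = C c * ∏ i : Fin n, (X - C (x i)) := by
    conv_lhs => rw [← Polynomial.C_leadingCoeff_mul_prod_multiset_X_sub_C
      (p := P) (by rw [hroots, hdeg]; exact hcardv)]
    rw [hroots, hsval, Multiset.map_map, Finset.prod_eq_multiset_prod]
    rfl
  have hevalP : ∀ y : ℝ, P.eval y = c * ∏ i : Fin n, (y - x i) := by
    intro y
    rw [hfac]
    simp [Polynomial.eval_prod]
  have hprod : c * ∏ i : Fin n, (b - x i) = 1 := by rw [← hevalP b, hPb]
  have key : ∀ i : Fin n, c * ∏ j ∈ Finset.univ.erase i, (b - x j) = 1 / (b - x i) := by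
    intro i
    have h1 : (b - x i) * ∏ j ∈ Finset.univ.erase i, (b - x j) = ∏ j : Fin n, (b - x j) :=
      Finset.mul_prod_erase Finset.univ (fun j => b - x j) (Finset.mem_univ i)
    rw [eq_div_iff (hpos i).ne']
    calc c * (∏ j ∈ Finset.univ.erase i, (b - x j)) * (b - x i)
        = c * ((b - x i) * ∏ j ∈ Finset.univ.erase i, (b - x j)) := by ring
      _ = c * ∏ j : Fin n, (b - x j) := by rw [h1]
      _ = 1 := hprod
  have hD : (Polynomial.derivative P).eval b = ∑ i : Fin n, 1 / (b - x i) := by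
    rw [hfac, Polynomial.derivative_mul, Polynomial.derivative_C, zero_mul, zero_add]
    rw [Finset.prod_eq_multiset_prod, Polynomial.derivative_prod]
    rw [Polynomial.eval_mul, Polynomial.eval_C]
    have : (Multiset.map
        (fun i => (Multiset.map (fun j => X - C (x j)) (Finset.univ.val.erase i)).prod *
          Polynomial.derivative (X - C (x i))) Finset.univ.val).sum =
        ∑ i : Fin n, ∏ j ∈ Finset.univ.erase i, (X - C (x j)) := by
      rw [Finset.sum_eq_multiset_sum]
      congr 1
      apply Multiset.map_congr rfl
      intro i _
      rw [Finset.prod_eq_multiset_prod, Finset.erase_val]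
      simp
    rw [this, Polynomial.eval_finset_sum]
    rw [Finset.mul_sum]
    refine Finset.sum_congr rfl fun i _ => ?_
    rw [Polynomial.eval_prod]
    simp only [Polynomial.eval_sub, Polynomial.eval_X, Polynomial.eval_C]
    exact key i
  constructor
  · rw [hD]
    exact Finset.single_le_sum (f := fun i : Fin n => 1 / (b - x i))
      (fun i _ => div_nonneg zero_le_one (hpos i).le) (Finset.mem_univ l)
  · intro h2
    rw [hD, ← Finset.add_sum_erase _ _ (Finset.mem_univ l)]
    have h0 : (⟨0, by omega⟩ : Fin n) ∈ Finset.univ.erase l := by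
      rw [Finset.mem_erase]
      refine ⟨?_, Finset.mem_univ _⟩
      simp only [hl, ne_eq, Fin.mk.injEq]
      omega
    have hrest : 0 < ∑ j ∈ Finset.univ.erase l, 1 / (b - x j) :=
      Finset.sum_pos (fun j _ => div_pos one_pos (hpos j)) ⟨_, h0⟩
    linarith
end
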